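/- The Lie subalgebra of divergence-zero polynomial vector fields on the plane generated by the two elements δ_{−1,2} = 3y² ∂/∂x and δ_{2,−1} = 3x² ∂/∂y contains δ_{i,j} for every pair (i,j) with i,j ≥ −1, i−j ≡ 0 mod 3, and (i,j) ∉ {(−1,−1),(0,0)}. -/

import Mathlib

/-!
`δ_{i,j}` is the Hamiltonian vector field `H_f = f_y ∂_x - f_x ∂_y` of the monomial
`f = x^(i+1) y^(j+1)`, and `f ↦ H_f` turns the Poisson bracket `{f, g} = H_f g` into the
commutator of derivations. Bracketing with `H_{y³} = δ_{-1,2}` and `H_{x³} = δ_{2,-1}` sends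
`H_{x^a y^b}` to nonzero multiples of `H_{x^(a-1) y^(b+2)}` and `H_{x^(a+2) y^(b-1)}`. Hence an
induction on `a + b`, starting at `a + b = 3` where `y³` and `x³` are the only monomials with
`a ≡ b (mod 3)`, reaches every `x^a y^b` with `a ≡ b (mod 3)` and `a + b ≥ 3`.
-/

open MvPolynomial

variable (K : Type*) [Field K] [CharZero K]

/-- The divergence-zero vector field
`δ_{i,j} = (j+1) x^(i+1) y^j ∂/∂x - (i+1) x^i y^(j+1) ∂/∂y` on the plane, as a derivation
of `K[x,y]` (for `i, j ≥ -1`; negative exponents only ever occur with coefficient `0`). -/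
noncomputable def deltaDer (i j : ℤ) :
    Derivation K (MvPolynomial (Fin 2) K) (MvPolynomial (Fin 2) K) :=
  MvPolynomial.mkDerivation K fun v =>
    if v = 0 then (j + 1 : ℤ) • (X 0 ^ (i + 1).toNat * X 1 ^ j.toNat)
    else -((i + 1 : ℤ) • (X 0 ^ i.toNat * X 1 ^ (j + 1).toNat))

namespace MvPolynomial

variable {R σ : Type*} [CommRing R]

theorem pderiv_pderiv_comm (i j : σ) (f : MvPolynomial σ R) :
    pderiv i (pderiv j f) = pderiv j (pderiv i f) := by
  classical
  suffices h :
      ⁅pderiv i, pderiv j⁆ = (0 : Derivation R (MvPolynomial σ R) (MvPolynomial σ R)) by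
    rw [← sub_eq_zero, ← Derivation.commutator_apply, h, Derivation.zero_apply]
  refine derivation_ext fun k => ?_
  simp [Derivation.commutator_apply, pderiv_X, Pi.single_apply, apply_ite]

end MvPolynomial

variable {R : Type*} [CommRing R]

noncomputable def hamiltonian (f : MvPolynomial (Fin 2) R) :
    Derivation R (MvPolynomial (Fin 2) R) (MvPolynomial (Fin 2) R) :=
  pderiv 1 f • pderiv 0 - pderiv 0 f • pderiv 1

theorem hamiltonian_apply (f g : MvPolynomial (Fin 2) R) :
    hamiltonian f g = pderiv 1 f * pderiv 0 g - pderiv 0 f * pderiv 1 g := rfl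

theorem hamiltonian_smul (c : R) (f : MvPolynomial (Fin 2) R) :
    hamiltonian (c • f) = c • hamiltonian f :=
  Derivation.ext fun g => by
    simp only [Derivation.smul_apply, hamiltonian_apply, Derivation.map_smul, smul_sub,
      smul_mul_assoc]

theorem lie_hamiltonian (f g : MvPolynomial (Fin 2) R) :
    ⁅hamiltonian f, hamiltonian g⁆ = hamiltonian (hamiltonian f g) := by
  refine Derivation.ext fun p => ?_
  simp only [Derivation.commutator_apply, hamiltonian_apply, map_sub, Derivation.leibniz,
    smul_eq_mul, pderiv_pderiv_comm (0 : Fin 2) 1]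
  ring

theorem lie_hamiltonian_X_one_pow_three (a b : ℕ) :
    ⁅hamiltonian (X 1 ^ 3 : MvPolynomial (Fin 2) R), hamiltonian (X 0 ^ a * X 1 ^ b)⁆ =
      (3 * a : R) • hamiltonian (X 0 ^ (a - 1) * X 1 ^ (b + 2) : MvPolynomial (Fin 2) R) := by
  rw [lie_hamiltonian, ← hamiltonian_smul]
  congr 1
  simp only [hamiltonian_apply, pderiv_mul, pderiv_pow, pderiv_X_self, pderiv_X_of_ne one_ne_zero,
    pderiv_X_of_ne zero_ne_one, Algebra.smul_def, map_mul, map_ofNat, map_natCast]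
  ring

theorem lie_hamiltonian_X_zero_pow_three (a b : ℕ) :
    ⁅hamiltonian (X 0 ^ 3 : MvPolynomial (Fin 2) R), hamiltonian (X 0 ^ a * X 1 ^ b)⁆ =
      (-(3 * b) : R) • hamiltonian (X 0 ^ (a + 2) * X 1 ^ (b - 1) : MvPolynomial (Fin 2) R) := by
  rw [lie_hamiltonian, ← hamiltonian_smul]
  congr 1
  simp only [hamiltonian_apply, pderiv_mul, pderiv_pow, pderiv_X_self, pderiv_X_of_ne one_ne_zero,
    pderiv_X_of_ne zero_ne_one, Algebra.smul_def, map_mul, map_ofNat, map_natCast, map_neg]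
  ring

omit [CharZero K] in
theorem deltaDer_eq_hamiltonian {i j : ℤ} (hi : -1 ≤ i) (hj : -1 ≤ j) :
    deltaDer K i j = hamiltonian (X 0 ^ (i + 1).toNat * X 1 ^ (j + 1).toNat) := by
  obtain ⟨a, rfl⟩ : ∃ a : ℕ, i = a - 1 := ⟨(i + 1).toNat, by omega⟩
  obtain ⟨b, rfl⟩ : ∃ b : ℕ, j = b - 1 := ⟨(j + 1).toNat, by omega⟩
  refine derivation_ext (Fin.forall_fin_two.mpr ⟨?_, ?_⟩)
  all_goals
    simp only [deltaDer, mkDerivation_X, hamiltonian_apply, pderiv_mul, pderiv_pow, pderiv_X_self,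
      pderiv_X_of_ne one_ne_zero, pderiv_X_of_ne zero_ne_one, sub_add_cancel, Int.toNat_natCast,
      Int.pred_toNat, zsmul_eq_mul, Int.cast_natCast, if_pos, if_neg one_ne_zero]
    ring

variable {K} in
theorem hamiltonian_X_pow_mul_X_pow_mem
    {L : LieSubalgebra K (Derivation K (MvPolynomial (Fin 2) K) (MvPolynomial (Fin 2) K))}
    (hy : hamiltonian (X 1 ^ 3) ∈ L) (hx : hamiltonian (X 0 ^ 3) ∈ L) {a b : ℕ}
    (hab : a ≡ b [MOD 3]) (h3 : 3 ≤ a + b) : hamiltonian (X 0 ^ a * X 1 ^ b) ∈ L := by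
  induction hn : a + b using Nat.strong_induction_on generalizing a b with
  | _ n ih =>
  subst hn
  unfold Nat.ModEq at hab
  by_cases hb : 2 ≤ b
  · obtain ⟨b, rfl⟩ : ∃ c, b = c + 2 := ⟨b - 2, by omega⟩
    by_cases hbase : a = 0 ∧ b = 1
    · simpa [hbase] using hy
    have hprev : hamiltonian (X 0 ^ (a + 1) * X 1 ^ b) ∈ L :=
      ih _ (by omega) (by unfold Nat.ModEq; omega) (by omega) rfl
    have hlie := L.lie_mem hy hprev
    rw [lie_hamiltonian_X_one_pow_three] at hlie
    have hc : 3 * ((a + 1 : ℕ) : K) ≠ 0 := by exact_mod_cast (by omega : 3 * (a + 1) ≠ 0)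
    simpa using (L.toSubmodule.smul_mem_iff hc).mp hlie
  · obtain ⟨a, rfl⟩ : ∃ c, a = c + 2 := ⟨a - 2, by omega⟩
    by_cases hbase : a = 1 ∧ b = 0
    · simpa [hbase] using hx
    have hprev : hamiltonian (X 0 ^ a * X 1 ^ (b + 1)) ∈ L :=
      ih _ (by omega) (by unfold Nat.ModEq; omega) (by omega) rfl
    have hlie := L.lie_mem hx hprev
    rw [lie_hamiltonian_X_zero_pow_three] at hlie
    have hc : -(3 * ((b + 1 : ℕ) : K)) ≠ 0 :=
      neg_ne_zero.mpr (by exact_mod_cast (by omega : 3 * (b + 1) ≠ 0))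
    simpa using (L.toSubmodule.smul_mem_iff hc).mp hlie

/-- The Lie subalgebra of vector fields on the plane generated by
`δ_{-1,2} = 3y² ∂/∂x` and `δ_{2,-1} = 3x² ∂/∂y` contains `δ_{i,j}` for all `(i,j)` with
`i, j ≥ -1`, `i ≡ j (mod 3)`, `(i,j) ∉ {(-1,-1), (0,0)}`. -/
theorem deltaDer_mem_lieSpan
    (i j : ℤ) (hi : -1 ≤ i) (hj : -1 ≤ j) (hmod : (i - j) % 3 = 0)
    (h1 : ¬(i = -1 ∧ j = -1)) (h2 : ¬(i = 0 ∧ j = 0)) :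
    deltaDer K i j ∈
      LieSubalgebra.lieSpan K
        (Derivation K (MvPolynomial (Fin 2) K) (MvPolynomial (Fin 2) K))
        {deltaDer K (-1) 2, deltaDer K 2 (-1)} := by
  have hy : deltaDer K (-1) 2 = hamiltonian (X 1 ^ 3) := by
    simpa using deltaDer_eq_hamiltonian K (i := -1) (j := 2) (by norm_num) (by norm_num)
  have hx : deltaDer K 2 (-1) = hamiltonian (X 0 ^ 3) := by
    simpa using deltaDer_eq_hamiltonian K (i := 2) (j := -1) (by norm_num) (by norm_num)
  rw [deltaDer_eq_hamiltonian K hi hj, hy, hx]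
  exact hamiltonian_X_pow_mul_X_pow_mem (LieSubalgebra.subset_lieSpan (by simp))
    (LieSubalgebra.subset_lieSpan (by simp)) (by unfold Nat.ModEq; omega) (by omega)
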